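/- Let α₀ ∈ ℝ and let σ₀ be a disc automorphism such that e^{iα₀} ∫₀^z [f'(σ₀(ξ)) − f'(σ₀(0))] dξ = f(z) for every f ∈ 𝒵₀^{(0,1)} and every z ∈ Δ. Then e^{iα₀} = 1 and σ₀(z) = z for all z ∈ Δ. -/

import Mathlib

open Complex MeasureTheory

noncomputable section

/-- The open unit disc in the complex plane. -/
def unitDisc : Set ℂ := Metric.ball 0 1

/-- `(1-|z|²)|f''(z)| → 0` as `|z| → 1⁻`. -/
def ZygVanish (f : ℂ → ℂ) : Prop :=
  ∀ ε > 0, ∃ r : ℝ, r < 1 ∧ ∀ z : ℂ, r < ‖z‖ → ‖z‖ < 1 →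
    (1 - ‖z‖ ^ 2) * ‖deriv (deriv f) z‖ < ε

/-- Membership in the little Zygmund space `𝒵₀`: `f` is analytic (holomorphic) on the open
unit disc, continuous on the closed unit disc, and `(1-|z|²)|f''(z)| → 0` as `|z| → 1⁻`. -/
def MemZ0 (f : ℂ → ℂ) : Prop :=
  DifferentiableOn ℂ f unitDisc ∧ ContinuousOn f (Metric.closedBall 0 1) ∧ ZygVanish f

/-- Membership in the subspace `𝒵₀^{(0,1)} = {f ∈ 𝒵₀ : f(0) = f'(0) = 0}`. -/
def MemZ01 (f : ℂ → ℂ) : Prop :=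
  MemZ0 f ∧ f 0 = 0 ∧ deriv f 0 = 0

/-- `sup_{|z|<1} (1-|z|²)|f''(z)|`, the norm of `𝒵₀^{(0,1)}`. -/
noncomputable def zygSup (f : ℂ → ℂ) : ℝ :=
  sSup ((fun z => (1 - ‖z‖ ^ 2) * ‖deriv (deriv f) z‖) '' unitDisc)

/-- The Zygmund norm `‖f‖_𝒵 = |f(0)| + |f'(0)| + sup_{|z|<1}(1-|z|²)|f''(z)|`. -/
noncomputable def zygNorm (f : ℂ → ℂ) : ℝ :=
  ‖f 0‖ + ‖deriv f 0‖ + zygSup f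

/-- A disc automorphism: `σ(z) = λ(z-a)/(1 - conj(a) z)` on `Δ`, with `|λ| = 1`, `|a| < 1`. -/
def IsDiscAut (σ : ℂ → ℂ) : Prop :=
  ∃ lam a : ℂ, ‖lam‖ = 1 ∧ ‖a‖ < 1 ∧
    ∀ z ∈ unitDisc, σ z = lam * (z - a) / (1 - (starRingEnd ℂ) a * z)

/-- `∫₀^z g(ξ) dξ`, the integral taken along the segment from `0` to `z`. -/
noncomputable def segIntegral (g : ℂ → ℂ) (z : ℂ) : ℂ :=
  z * ∫ t in (0:ℝ)..1, g ((t : ℂ) * z)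

/-!
Differentiating the identity along rays shows that every `f ∈ 𝒵₀^{(0,1)}` satisfies
`f'(z) = e^{iα₀} (f'(σ₀ z) - f'(σ₀ 0))` on `Δ`. Testing with `f = z²` and `f = z³` gives
`z = e^{iα₀} (σ₀ z - σ₀ 0)` and `z² = e^{iα₀} (σ₀(z)² - σ₀(0)²)`; evaluating at `z = ±1/2` forces
`σ₀ 0 = 0` and `e^{iα₀} = 1`, hence `σ₀ z = z`.
-/

open Set Filter Topology

lemma mem_unitDisc_iff {z : ℂ} : z ∈ unitDisc ↔ ‖z‖ < 1 := by
  simp [unitDisc]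

lemma zygVanish_of_continuousOn {f : ℂ → ℂ}
    (hf : ContinuousOn (deriv (deriv f)) (Metric.closedBall 0 1)) : ZygVanish f := by
  obtain ⟨C, hC⟩ := (isCompact_closedBall (0 : ℂ) 1).exists_bound_of_continuousOn hf
  have hC0 : 0 ≤ C := (norm_nonneg _).trans (hC 0 (by simp))
  intro ε hε
  refine ⟨1 - ε / (2 * (C + 1)), by linarith [show 0 < ε / (2 * (C + 1)) by positivity], ?_⟩
  intro z hrz hz1
  have hbound := hC z (by simpa using hz1.le)
  have hrz' : (1 - ‖z‖) * (2 * (C + 1)) < ε := by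
    rw [← lt_div_iff₀ (by positivity)]
    linarith
  calc (1 - ‖z‖ ^ 2) * ‖deriv (deriv f) z‖
      ≤ (1 - ‖z‖ ^ 2) * (C + 1) := by
        gcongr
        · nlinarith [norm_nonneg z]
        · linarith
    _ < ε := by nlinarith [norm_nonneg z]

lemma memZ0_of_differentiable {f : ℂ → ℂ} (hf : Differentiable ℂ f) : MemZ0 f := by
  have hf'' := (hf.differentiableOn.deriv isOpen_univ).deriv isOpen_univ
  exact ⟨hf.differentiableOn, hf.continuous.continuousOn,
    zygVanish_of_continuousOn (hf''.continuousOn.mono (subset_univ _))⟩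

lemma memZ01_pow {n : ℕ} (hn : 2 ≤ n) : MemZ01 (fun w : ℂ => w ^ n) :=
  ⟨memZ0_of_differentiable (differentiable_pow n), by simp; omega, by simp; omega⟩

lemma norm_sub_lt_norm_one_sub_conj_mul {a z : ℂ} (ha : ‖a‖ < 1) (hz : ‖z‖ < 1) :
    ‖z - a‖ < ‖1 - starRingEnd ℂ a * z‖ := by
  have hdiff : normSq (1 - starRingEnd ℂ a * z) - normSq (z - a)
      = (1 - normSq a) * (1 - normSq z) := by
    simp only [normSq_apply, sub_re, sub_im, mul_re, mul_im, conj_re, conj_im, one_re, one_im]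
    ring
  have hprod : 0 < (1 - normSq a) * (1 - normSq z) := by
    rw [← Complex.sq_norm, ← Complex.sq_norm]
    exact mul_pos (by nlinarith [norm_nonneg a]) (by nlinarith [norm_nonneg z])
  rw [← sq_lt_sq₀ (norm_nonneg _) (norm_nonneg _), Complex.sq_norm, Complex.sq_norm]
  linarith

namespace IsDiscAut

variable {σ : ℂ → ℂ}

lemma mapsTo (hσ : IsDiscAut σ) : MapsTo σ unitDisc unitDisc := by
  obtain ⟨lam, a, hlam, ha, hform⟩ := hσ
  intro z hz
  have hlt := norm_sub_lt_norm_one_sub_conj_mul ha (mem_unitDisc_iff.1 hz)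
  rw [mem_unitDisc_iff, hform z hz, norm_div, norm_mul, hlam, one_mul,
    div_lt_one ((norm_nonneg _).trans_lt hlt)]
  exact hlt

lemma continuousOn (hσ : IsDiscAut σ) : ContinuousOn σ unitDisc := by
  obtain ⟨lam, a, -, ha, hform⟩ := hσ
  refine ContinuousOn.congr ?_ hform
  refine ContinuousOn.div (by fun_prop) (by fun_prop) fun z hz => ?_
  exact norm_pos_iff.1 ((norm_nonneg _).trans_lt
    (norm_sub_lt_norm_one_sub_conj_mul ha (mem_unitDisc_iff.1 hz)))

end IsDiscAut

lemma segIntegral_ofReal_mul (g : ℂ → ℂ) (z : ℂ) (s : ℝ) :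
    segIntegral g (s * z) = z * ∫ u in (0 : ℝ)..s, g (u * z) := by
  rcases eq_or_ne s 0 with rfl | hs
  · simp [segIntegral]
  have hrescale : ∫ t in (0 : ℝ)..1, g (t * (s * z))
      = ∫ t in (0 : ℝ)..1, (fun u : ℝ => g (u * z)) (t * s) := by
    push_cast
    simp only [mul_assoc]
  rw [segIntegral, hrescale, intervalIntegral.integral_comp_mul_right (fun u : ℝ => g (u * z)) hs]
  simp only [zero_mul, one_mul, real_smul, ofReal_inv]
  field_simp [ofReal_ne_zero.2 hs]

lemma eventually_ofReal_mul_mem_unitDisc {z : ℂ} (hz : z ∈ unitDisc) :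
    ∀ᶠ s : ℝ in 𝓝 1, (s : ℂ) * z ∈ unitDisc := by
  have hcont : ContinuousAt (fun s : ℝ => (s : ℂ) * z) 1 := by fun_prop
  exact hcont.preimage_mem_nhds (by rw [ofReal_one, one_mul]; exact Metric.isOpen_ball.mem_nhds hz)

lemma hasDerivAt_segIntegral_ofReal_mul {g : ℂ → ℂ} (hg : ContinuousOn g unitDisc)
    {z : ℂ} (hz : z ∈ unitDisc) :
    HasDerivAt (fun s : ℝ => segIntegral g (s * z)) (z * g z) 1 := by
  set U := {u : ℝ | (u : ℂ) * z ∈ unitDisc}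
  have hU : IsOpen U := Metric.isOpen_ball.preimage (by fun_prop)
  have hgU : ContinuousOn (fun u : ℝ => g (u * z)) U :=
    hg.comp (by fun_prop) fun _ hu => hu
  have hsegment : uIcc 0 1 ⊆ U := by
    intro u hu
    rw [uIcc_of_le zero_le_one] at hu
    rw [show u ∈ U ↔ (u : ℂ) * z ∈ unitDisc from Iff.rfl, mem_unitDisc_iff, norm_mul, norm_real,
      Real.norm_of_nonneg hu.1]
    nlinarith [mem_unitDisc_iff.1 hz, norm_nonneg z, hu.2]
  have h1 : (1 : ℝ) ∈ U := hsegment (by simp)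
  have hftc := intervalIntegral.integral_hasDerivAt_right
    ((hgU.mono hsegment).intervalIntegrable) (hgU.stronglyMeasurableAtFilter hU 1 h1)
    (hgU.continuousAt (hU.mem_nhds h1))
  simp_rw [segIntegral_ofReal_mul]
  simpa using hftc.const_mul z

lemma mul_eq_of_mul_segIntegral_eq {g F : ℂ → ℂ} {c F' z : ℂ} (hg : ContinuousOn g unitDisc)
    (hgF : ∀ w ∈ unitDisc, c * segIntegral g w = F w) (hz : z ∈ unitDisc) (hz0 : z ≠ 0)
    (hF : HasDerivAt F F' z) : c * g z = F' := by
  have hlhs := (hasDerivAt_segIntegral_ofReal_mul hg hz).const_mul c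
  have hrhs : HasDerivAt (fun s : ℝ => F (s * z)) (F' * z) 1 := by
    have hray : HasDerivAt (fun w : ℂ => w * z) z ((1 : ℝ) : ℂ) := by
      simpa using (hasDerivAt_id ((1 : ℝ) : ℂ)).mul_const z
    exact (HasDerivAt.comp _ (by simpa using hF) hray).comp_ofReal
  have heq : (fun s : ℝ => c * segIntegral g (s * z)) =ᶠ[𝓝 1] fun s => F (s * z) :=
    (eventually_ofReal_mul_mem_unitDisc hz).mono fun s hs => hgF _ hs
  have hunique := hlhs.unique (hrhs.congr_of_eventuallyEq heq)
  exact mul_left_cancel₀ hz0 (by linear_combination hunique)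

lemma mul_deriv_comp_sub_eq_deriv {σ : ℂ → ℂ} {c : ℂ} (hσc : ContinuousOn σ unitDisc)
    (hσm : MapsTo σ unitDisc unitDisc)
    (h : ∀ f : ℂ → ℂ, MemZ01 f → ∀ z ∈ unitDisc,
      c * segIntegral (fun ξ => deriv f (σ ξ) - deriv f (σ 0)) z = f z)
    {f : ℂ → ℂ} (hf : MemZ01 f) {z : ℂ} (hz : z ∈ unitDisc) :
    c * (deriv f (σ z) - deriv f (σ 0)) = deriv f z := by
  rcases eq_or_ne z 0 with rfl | hz0
  · simp [hf.2.2]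
  have hf' : ContinuousOn (deriv f) unitDisc :=
    (hf.1.1.deriv Metric.isOpen_ball).continuousOn
  refine mul_eq_of_mul_segIntegral_eq (g := fun ξ => deriv f (σ ξ) - deriv f (σ 0))
    ((hf'.comp hσc hσm).sub continuousOn_const) (h f hf) hz hz0 ?_
  exact (hf.1.1.differentiableAt (Metric.isOpen_ball.mem_nhds hz)).hasDerivAt

lemma eq_one_and_eq_self_of_mul_sub_eq {e : ℂ} {σ : ℂ → ℂ} (he : e ≠ 0)
    (hsq : ∀ z ∈ unitDisc, e * (σ z - σ 0) = z)
    (hcube : ∀ z ∈ unitDisc, e * (σ z ^ 2 - σ 0 ^ 2) = z ^ 2) :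
    e = 1 ∧ ∀ z ∈ unitDisc, σ z = z := by
  have hhalf : (1 / 2 : ℂ) ∈ unitDisc := by rw [mem_unitDisc_iff]; norm_num
  have hmhalf : (-1 / 2 : ℂ) ∈ unitDisc := by rw [mem_unitDisc_iff]; norm_num
  have hp := hsq _ hhalf
  have hq := hsq _ hmhalf
  have hp_add : σ (1 / 2) + σ 0 = 1 / 2 := by
    linear_combination 2 * hcube _ hhalf - 2 * (σ (1 / 2) + σ 0) * hp
  have hq_add : σ (-1 / 2) + σ 0 = -1 / 2 := by
    linear_combination 2 * (σ (-1 / 2) + σ 0) * hq - 2 * hcube _ hmhalf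
  have hσ0 : σ 0 = 0 := by
    have he_σ0 : e * σ 0 = 0 := by
      linear_combination -(hp - e * hp_add + hq - e * hq_add) / 4
    exact (mul_eq_zero.1 he_σ0).resolve_left he
  have he1 : e = 1 := by linear_combination 2 * hp - 2 * e * hp_add + 4 * e * hσ0
  refine ⟨he1, fun z hz => ?_⟩
  linear_combination hsq z hz - σ z * he1 + e * hσ0

/-- STATEMENT 12: If `α₀ ∈ ℝ` and a disc automorphism `σ₀` satisfy
`e^{iα₀} ∫₀^z [f'(σ₀(ξ)) - f'(σ₀(0))] dξ = f(z)` for every `f ∈ 𝒵₀^{(0,1)}` and `z ∈ Δ`,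
then `e^{iα₀} = 1` and `σ₀` is the identity on `Δ`. -/
theorem stmt_12 (α₀ : ℝ) (σ₀ : ℂ → ℂ) (hσ₀ : IsDiscAut σ₀)
    (h : ∀ f : ℂ → ℂ, MemZ01 f → ∀ z ∈ unitDisc,
      Complex.exp (Complex.I * α₀) *
        segIntegral (fun ξ => deriv f (σ₀ ξ) - deriv f (σ₀ 0)) z = f z) :
    Complex.exp (Complex.I * α₀) = 1 ∧ ∀ z ∈ unitDisc, σ₀ z = z := by
  have key := fun f (hf : MemZ01 f) z (hz : z ∈ unitDisc) =>
    mul_deriv_comp_sub_eq_deriv hσ₀.continuousOn hσ₀.mapsTo h hf hz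
  refine eq_one_and_eq_self_of_mul_sub_eq (Complex.exp_ne_zero _) (fun z hz => ?_) fun z hz => ?_
  · have hsq := key _ (memZ01_pow le_rfl) z hz
    simp only [deriv_pow_field] at hsq
    linear_combination hsq / 2
  · have hcube := key _ (memZ01_pow (by norm_num : 2 ≤ 3)) z hz
    simp only [deriv_pow_field] at hcube
    linear_combination hcube / 3
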